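/- arXiv:0901.2010 — 2 statements merged into one kernel-verified Lean document; each statement's English description precedes it below -/
import Mathlib

section
/- Let g∈C_2(V) be such that δg∈C_3^{1+}(V). Then the 1-increment (Id−Λδ)g satisfies δ((Id−Λδ)g)=0, and for all 0≤s<t≤T, ((Id−Λδ)g)_{st} = lim_{|Π_{st}|→0} Σ_{i=0}^{n−1} g_{t_i t_{i+1}}, where the limit is taken over all partitions Π_{st}={s=t_0<t_1<…<t_n=t} of [s,t] as the mesh of the partition tends to zero. -/
/-!
STATEMENT 2: For `g ∈ C₂(V)` with `δg ∈ C₃^{1+}(V)`, the 1-increment `(Id - Λδ)g`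
satisfies `δ((Id - Λδ)g) = 0` and equals the limit of Riemann sums `Σ g_{tᵢ t_{i+1}}`
along partitions of `[s,t]` with vanishing mesh (Corollary 2.1).
-/

open Set Filter MeasureTheory Topology

noncomputable section

variable {V : Type*} [NormedAddCommGroup V]

/-- Hölder-type bound for a 1-increment (2-parameter function) on `[a,b]`. -/
def HBound2 (a b μ C : ℝ) (f : ℝ → ℝ → V) : Prop :=
  ∀ s ∈ Icc a b, ∀ t ∈ Icc a b, ‖f s t‖ ≤ C * |t - s| ^ μ

/-- `f ∈ C₂^μ([a,b];V)`. -/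
def Mem2 (a b μ : ℝ) (f : ℝ → ℝ → V) : Prop := ∃ C, 0 ≤ C ∧ HBound2 a b μ C f

/-- The Hölder norm `‖f‖_μ` of a 1-increment on `[a,b]`. -/
def HNorm2 (a b μ : ℝ) (f : ℝ → ℝ → V) : ℝ := sInf {C | 0 ≤ C ∧ HBound2 a b μ C f}

/-- The supremum norm of a path on `[a,b]`. -/
def SupNorm (a b : ℝ) (g : ℝ → V) : ℝ := sInf {C | 0 ≤ C ∧ ∀ t ∈ Icc a b, ‖g t‖ ≤ C}

/-- The operator `δ` on 1-increments: `(δh)_{sut} = h_{st} - h_{su} - h_{ut}`. -/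
def incr2 (h : ℝ → ℝ → V) : ℝ → ℝ → ℝ → V := fun s u t => h s t - h s u - h u t

/-- The operator `δ` on 2-increments. -/
def incr3 (h : ℝ → ℝ → ℝ → V) : ℝ → ℝ → ℝ → ℝ → V :=
  fun s u v t => h u v t - h s v t + h s u t - h s u v

/-- The two-exponent Hölder bound for 2-increments. -/
def HBound3 (a b γ ρ C : ℝ) (h : ℝ → ℝ → ℝ → V) : Prop :=
  ∀ s ∈ Icc a b, ∀ u ∈ Icc a b, ∀ t ∈ Icc a b, ‖h s u t‖ ≤ C * |u - s| ^ γ * |t - u| ^ ρ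

/-- The norm `‖h‖_{γ,ρ}` on 2-increments. -/
def HNorm3gr (a b γ ρ : ℝ) (h : ℝ → ℝ → ℝ → V) : ℝ := sInf {C | 0 ≤ C ∧ HBound3 a b γ ρ C h}

/-- `h ∈ C₃^μ([a,b];V)`: `h` admits a finite decomposition `h = Σᵢ hᵢ` with
`‖hᵢ‖_{ρᵢ,μ-ρᵢ} < ∞`, `0 < ρᵢ < μ`. -/
def Mem3 (a b μ : ℝ) (h : ℝ → ℝ → ℝ → V) : Prop :=
  ∃ (m : ℕ) (hs : Fin m → (ℝ → ℝ → ℝ → V)) (ρs : Fin m → ℝ),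
    (∀ i, 0 < ρs i ∧ ρs i < μ ∧ ∃ C, 0 ≤ C ∧ HBound3 a b (ρs i) (μ - ρs i) C (hs i)) ∧
    ∀ s ∈ Icc a b, ∀ u ∈ Icc a b, ∀ t ∈ Icc a b, h s u t = ∑ i, hs i s u t

/-- The norm `‖h‖_μ` on `C₃^μ([a,b];V)`, as an infimum over decompositions. -/
def HNorm3 (a b μ : ℝ) (h : ℝ → ℝ → ℝ → V) : ℝ :=
  sInf {c | ∃ (m : ℕ) (hs : Fin m → (ℝ → ℝ → ℝ → V)) (ρs : Fin m → ℝ),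
    (∀ i, 0 < ρs i ∧ ρs i < μ ∧ ∃ C, 0 ≤ C ∧ HBound3 a b (ρs i) (μ - ρs i) C (hs i)) ∧
    (∀ s ∈ Icc a b, ∀ u ∈ Icc a b, ∀ t ∈ Icc a b, h s u t = ∑ i, hs i s u t) ∧
    c = ∑ i, HNorm3gr a b (ρs i) (μ - ρs i) (hs i)}

/-- `C₂^{1+}`. -/
def Mem2plus (a b : ℝ) (f : ℝ → ℝ → V) : Prop := ∃ μ > 1, Mem2 a b μ f

/-- `C₃^{1+}`. -/
def Mem3plus (a b : ℝ) (h : ℝ → ℝ → ℝ → V) : Prop := ∃ μ > 1, Mem3 a b μ h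

/-- `h ∈ ker δ` (`h ∈ ZC₃([a,b];V)`). -/
def ZC3 (a b : ℝ) (h : ℝ → ℝ → ℝ → V) : Prop :=
  ∀ s ∈ Icc a b, ∀ u ∈ Icc a b, ∀ v ∈ Icc a b, ∀ t ∈ Icc a b, incr3 h s u v t = 0

/-- Defining properties of the sewing map `Λ` on `[a,b]`:
`δ ∘ Λ = Id` on `ZC₃^{1+}`, `Λ ∘ δ = Id` on `C₂^{1+}`, together with the contraction
bound `‖Λh‖_μ ≤ (2^μ - 2)⁻¹ ‖h‖_μ`. -/
def IsSewingMap (a b : ℝ) (Λ : (ℝ → ℝ → ℝ → V) → (ℝ → ℝ → V)) : Prop :=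
  (∀ h, Mem3plus a b h → ZC3 a b h → Mem2plus a b (Λ h) ∧
    ∀ s ∈ Icc a b, ∀ u ∈ Icc a b, ∀ t ∈ Icc a b, incr2 (Λ h) s u t = h s u t) ∧
  (∀ g : ℝ → ℝ → V, Mem2plus a b g →
    ∀ s ∈ Icc a b, ∀ t ∈ Icc a b, Λ (incr2 g) s t = g s t) ∧
  (∀ μ : ℝ, 1 < μ → ∀ h, Mem3 a b μ h → ZC3 a b h →
    HNorm2 a b μ (Λ h) ≤ ((2 : ℝ) ^ μ - 2)⁻¹ * HNorm3 a b μ h)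

/-- Convergence of Riemann sums along partitions of `[s,t]` whose mesh tends to `0`. -/
def RiemannLimit (s t : ℝ) (g : ℝ → ℝ → V) (L : V) : Prop :=
  ∀ ε > 0, ∃ η > 0, ∀ n : ℕ, ∀ π : Fin (n + 1) → ℝ,
    π 0 = s → π (Fin.last n) = t →
    (∀ i : Fin n, π i.castSucc ≤ π i.succ) →
    (∀ i : Fin n, π i.succ - π i.castSucc < η) →
    ‖(∑ i : Fin n, g (π i.castSucc) (π i.succ)) - L‖ < ε

/-- Telescoping sum over `Fin n`. -/
lemma fin_telescope {M : Type*} [AddCommGroup M] (n : ℕ) (G : Fin (n+1) → M) :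
    ∑ i : Fin n, (G i.succ - G i.castSucc) = G (Fin.last n) - G 0 := by
  have h := Finset.sum_range_sub (fun k => G ⟨min k n, by omega⟩) n
  have e1 : (⟨min n n, by omega⟩ : Fin (n+1)) = Fin.last n := by ext; simp [Fin.last]
  have e2 : (⟨min 0 n, by omega⟩ : Fin (n+1)) = 0 := by ext; simp
  rw [e1, e2] at h
  rw [← h, ← Fin.sum_univ_eq_sum_range]
  congr 1; ext i
  have l1 : (⟨min (i+1) n, by omega⟩ : Fin (n+1)) = i.succ := by
    ext; simp [Nat.min_eq_left (Nat.succ_le_of_lt i.isLt)]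
  have l2 : (⟨min (i:ℕ) n, by omega⟩ : Fin (n+1)) = i.castSucc := by
    ext; simp [Nat.min_eq_left (le_of_lt i.isLt)]
  rw [l1, l2]

theorem statement2 {V : Type*} [NormedAddCommGroup V]
    (T : ℝ) (hT : 0 < T)
    (Λ : (ℝ → ℝ → ℝ → V) → (ℝ → ℝ → V)) (hΛ : IsSewingMap 0 T Λ)
    (g : ℝ → ℝ → V) (hg0 : ∀ s, g s s = 0) (hg : Mem3plus 0 T (incr2 g)) :
    (∀ s ∈ Icc (0 : ℝ) T, ∀ u ∈ Icc (0 : ℝ) T, ∀ t ∈ Icc (0 : ℝ) T,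
      incr2 (fun a b => g a b - Λ (incr2 g) a b) s u t = 0) ∧
    (∀ s t : ℝ, 0 ≤ s → s < t → t ≤ T →
      RiemannLimit s t g (g s t - Λ (incr2 g) s t)) := by
  obtain ⟨hΛ1, hΛ2, hΛ3⟩ := hΛ
  have hZ : ZC3 0 T (incr2 g) := by
    intro s _ u _ v _ t _
    simp only [incr3, incr2]
    abel
  obtain ⟨hmem2, hδΛ⟩ := hΛ1 (incr2 g) hg hZ
  have part1 : ∀ s ∈ Icc (0 : ℝ) T, ∀ u ∈ Icc (0 : ℝ) T, ∀ t ∈ Icc (0 : ℝ) T,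
      incr2 (fun a b => g a b - Λ (incr2 g) a b) s u t = 0 := by
    intro s hs u hu t ht
    have h1 := hδΛ s hs u hu t ht
    simp only [incr2] at h1 ⊢
    calc g s t - Λ (incr2 g) s t - (g s u - Λ (incr2 g) s u) - (g u t - Λ (incr2 g) u t)
        = (g s t - g s u - g u t) -
            (Λ (incr2 g) s t - Λ (incr2 g) s u - Λ (incr2 g) u t) := by abel
      _ = 0 := by rw [h1]; abel
  refine ⟨part1, ?_⟩
  intro s t hs0 hst htT
  have hsT : s ∈ Icc (0 : ℝ) T := ⟨hs0, le_trans hst.le htT⟩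
  have htTm : t ∈ Icc (0 : ℝ) T := ⟨le_trans hs0 hst.le, htT⟩
  obtain ⟨μ, hμ, C, hC0, hB⟩ := hmem2
  intro ε hε
  have hts : 0 < t - s := by linarith
  have hμ1 : (0:ℝ) < μ - 1 := by linarith
  set B : ℝ := ε / ((C + 1) * (t - s)) with hBdef
  have hBpos : 0 < B := div_pos hε (by positivity)
  set m1 : ℝ := min B 1 with hm1def
  have hm1pos : 0 < m1 := lt_min hBpos one_pos
  refine ⟨m1 ^ (1 / (μ - 1)), Real.rpow_pos_of_pos hm1pos _, ?_⟩
  set η : ℝ := m1 ^ (1 / (μ - 1)) with hηdef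
  have hηpow : η ^ (μ - 1) = m1 := by
    rw [hηdef, ← Real.rpow_mul hm1pos.le, one_div_mul_cancel (ne_of_gt hμ1), Real.rpow_one]
  intro n π hπ0 hπl hmono hmesh
  have hMono : Monotone π := Fin.monotone_iff_le_succ.mpr hmono
  have hmem : ∀ i : Fin (n+1), π i ∈ Icc (0:ℝ) T := by
    intro i
    constructor
    · have h1 := hMono (Fin.zero_le i); rw [hπ0] at h1; linarith [hsT.1]
    · have h1 := hMono (Fin.le_last i); rw [hπl] at h1; linarith [htTm.2]
  have hfss : g s s - Λ (incr2 g) s s = 0 := by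
    have h := part1 s hsT s hsT s hsT
    simp only [incr2] at h
    rw [sub_self, zero_sub, neg_eq_zero] at h
    exact h
  have hf : ∀ i : Fin n,
      g (π i.castSucc) (π i.succ) - Λ (incr2 g) (π i.castSucc) (π i.succ)
      = (g s (π i.succ) - Λ (incr2 g) s (π i.succ))
        - (g s (π i.castSucc) - Λ (incr2 g) s (π i.castSucc)) := by
    intro i
    have h := part1 s hsT (π i.castSucc) (hmem _) (π i.succ) (hmem _)
    simp only [incr2] at h
    rw [sub_sub, sub_eq_zero] at h
    rw [h]; abel
  have hT1 : ∑ i : Fin n,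
      (g (π i.castSucc) (π i.succ) - Λ (incr2 g) (π i.castSucc) (π i.succ))
      = g s t - Λ (incr2 g) s t := by
    calc ∑ i : Fin n,
        (g (π i.castSucc) (π i.succ) - Λ (incr2 g) (π i.castSucc) (π i.succ))
        = ∑ i : Fin n, ((fun j => g s (π j) - Λ (incr2 g) s (π j)) i.succ
            - (fun j => g s (π j) - Λ (incr2 g) s (π j)) i.castSucc) := by
          exact Finset.sum_congr rfl fun i _ => hf i
      _ = (g s (π (Fin.last n)) - Λ (incr2 g) s (π (Fin.last n)))
            - (g s (π 0) - Λ (incr2 g) s (π 0)) :=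
          fin_telescope n (fun j => g s (π j) - Λ (incr2 g) s (π j))
      _ = g s t - Λ (incr2 g) s t := by rw [hπ0, hπl, hfss, sub_zero]
  have hsplit : (∑ i : Fin n, g (π i.castSucc) (π i.succ)) - (g s t - Λ (incr2 g) s t)
      = ∑ i : Fin n, Λ (incr2 g) (π i.castSucc) (π i.succ) := by
    rw [← hT1, ← Finset.sum_sub_distrib]
    exact Finset.sum_congr rfl fun i _ => by abel
  rw [hsplit]
  have hsumΔ : ∑ i : Fin n, (π i.succ - π i.castSucc) = t - s := by
    rw [fin_telescope n π, hπ0, hπl]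
  have hterm : ∀ i : Fin n, ‖Λ (incr2 g) (π i.castSucc) (π i.succ)‖
      ≤ C * m1 * (π i.succ - π i.castSucc) := by
    intro i
    have hΔ0 : (0:ℝ) ≤ π i.succ - π i.castSucc := by linarith [hmono i]
    have hb := hB (π i.castSucc) (hmem _) (π i.succ) (hmem _)
    have habs : |π i.succ - π i.castSucc| = π i.succ - π i.castSucc := abs_of_nonneg hΔ0
    rw [habs] at hb
    refine hb.trans ?_
    rw [mul_assoc]
    refine mul_le_mul_of_nonneg_left ?_ hC0
    rcases eq_or_lt_of_le hΔ0 with hΔ | hΔ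
    · rw [← hΔ, Real.zero_rpow (by linarith : μ ≠ 0), mul_zero]
    · have h1 : (π i.succ - π i.castSucc) ^ μ
          = (π i.succ - π i.castSucc) ^ (μ - 1) * (π i.succ - π i.castSucc) := by
        have h2 := Real.rpow_add hΔ (μ - 1) 1
        rw [Real.rpow_one] at h2
        rw [← h2]
        congr 1
        ring
      rw [h1]
      refine mul_le_mul_of_nonneg_right ?_ hΔ0
      calc (π i.succ - π i.castSucc) ^ (μ - 1) ≤ η ^ (μ - 1) :=
            Real.rpow_le_rpow hΔ0 (le_of_lt (by linarith [hmesh i])) hμ1.le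
        _ = m1 := hηpow
  calc ‖∑ i : Fin n, Λ (incr2 g) (π i.castSucc) (π i.succ)‖
      ≤ ∑ i : Fin n, ‖Λ (incr2 g) (π i.castSucc) (π i.succ)‖ := norm_sum_le _ _
    _ ≤ ∑ i : Fin n, C * m1 * (π i.succ - π i.castSucc) :=
        Finset.sum_le_sum fun i _ => hterm i
    _ = C * m1 * (t - s) := by rw [← Finset.mul_sum, hsumΔ]
    _ < ε := by
        have hm1B : m1 ≤ B := min_le_left _ _
        have h1 : C * m1 * (t - s) ≤ C * B * (t - s) :=
          mul_le_mul_of_nonneg_right (mul_le_mul_of_nonneg_left hm1B hC0) hts.le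
        have h2 : C * B * (t - s) = C * ε / (C + 1) := by
          rw [hBdef]; field_simp
        have h3 : C * ε / (C + 1) < ε := by
          rw [div_lt_iff₀ (by linarith : (0:ℝ) < C + 1)]; nlinarith
        linarith
end
end

section
/- Assume x satisfies Hypotheses (X1) and (X2), let κ∈(0,γ] with 3κ+γ>1, and let z∈Q_{κ,a,b}(ℝ^l) be a weakly controlled path with data (ζ¹,ζ²,r,ρ). Let φ∈C_b³(ℝ^l;ℝ) and set ẑ_t=φ(z_t), â=φ(a), b̂^j=∂_iφ(a)b^{ij}. Then ẑ is a weakly controlled path in Q_{κ,â,b̂}(ℝ): it admits the decomposition (δẑ)_{st}=(ζ̂¹_s)^j(δx^j)_{st}+(ζ̂²_s)^{jk}(x²_{st})^{kj}+r̂_{st} and (δ(ζ̂¹)^j)_{st}=(ζ̂²_s)^{jk}(δx^k)_{st}+ρ̂^j_{st}, with coefficients (ζ̂¹)^j=∂_iφ(z)(ζ¹)^{ij} and (ζ̂²)^{jk}=∂_iφ(z)(ζ²)^{ijk}+∂_{i₁i₂}φ(z)(ζ¹)^{i₁j}(ζ¹)^{i₂k}, and remainders r̂∈C_2^{3κ}(ℝ),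 ρ̂∈C_2^{2κ}(ℝ^{1×d}). Moreover there exists a constant c depending only on φ, x (through the Hölder norms of x, x², x³) and T such that N[ẑ;Q_{κ,â,b̂}(ℝ)] ≤ c(1+N[z;Q_{κ,a,b}(ℝ^l)]³). -/
/-!
STATEMENT 4: Composition of a weakly controlled path with a `C_b³` map `φ` is again
weakly controlled, with explicit coefficients, and the corresponding norm is cubically
bounded: `N[ẑ;Q] ≤ c (1 + N[z;Q]³)` for a constant depending only on `φ, x, T`.
-/

open Set Filter MeasureTheory Topology

noncomputable section

variable {V : Type*} [NormedAddCommGroup V]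

/-- Hypothesis (X1): `x` is `γ`-Hölder with `γ > 1/4` and admits a Lévy area `x²` and a
volume element `x³` satisfying Chen's relations. -/
structure HypX1 (T γ : ℝ) (d : ℕ) (x : ℝ → Fin d → ℝ)
    (x2 : ℝ → ℝ → Fin d → Fin d → ℝ) (x3 : ℝ → ℝ → Fin d → Fin d → Fin d → ℝ) : Prop where
  hγ : 1 / 4 < γ
  hx : Mem2 0 T γ (fun s t => x t - x s)
  hx2 : Mem2 0 T (2 * γ) x2
  hx3 : Mem2 0 T (3 * γ) x3
  chen2 : ∀ s ∈ Icc (0 : ℝ) T, ∀ u ∈ Icc (0 : ℝ) T, ∀ t ∈ Icc (0 : ℝ) T, ∀ i j,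
    x2 s t i j - x2 s u i j - x2 u t i j = (x u i - x s i) * (x t j - x u j)
  chen3 : ∀ s ∈ Icc (0 : ℝ) T, ∀ u ∈ Icc (0 : ℝ) T, ∀ t ∈ Icc (0 : ℝ) T, ∀ i j k,
    x3 s t i j k - x3 s u i j k - x3 u t i j k
      = x2 s u i j * (x t k - x u k) + (x u i - x s i) * x2 u t j k

/-- Hypothesis (X2): geometricity, `x²_{st} + (x²_{st})^* = δx_{st} ⊗ δx_{st}`. -/
def HypX2 (T : ℝ) {d : ℕ} (x : ℝ → Fin d → ℝ) (x2 : ℝ → ℝ → Fin d → Fin d → ℝ) : Prop :=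
  ∀ s ∈ Icc (0 : ℝ) T, ∀ t ∈ Icc (0 : ℝ) T, ∀ i j,
    x2 s t i j + x2 s t j i = (x t i - x s i) * (x t j - x s j)

/-- A weakly controlled path `z ∈ Q_{κ,a,b}(ℝ^l)`, with data `(z, ζ¹, ζ², r, ρ)`:
`δz^i = (ζ¹)^{ij} δx^j + (ζ²)^{ijk} (x²)^{kj} + r^i` and
`δ(ζ¹)^{ij} = (ζ²)^{ijk} δx^k + ρ^{ij}`. -/
structure WCP (T κ : ℝ) {d l : ℕ} (x : ℝ → Fin d → ℝ) (x2 : ℝ → ℝ → Fin d → Fin d → ℝ)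
    (a : Fin l → ℝ) (b : Fin l → Fin d → ℝ)
    (z : ℝ → Fin l → ℝ) (ζ1 : ℝ → Fin l → Fin d → ℝ) (ζ2 : ℝ → Fin l → Fin d → Fin d → ℝ)
    (r : ℝ → ℝ → Fin l → ℝ) (ρ : ℝ → ℝ → Fin l → Fin d → ℝ) : Prop where
  init : z 0 = a
  init1 : ζ1 0 = b
  hz : Mem2 0 T κ (fun s t => z t - z s)
  hζ1 : Mem2 0 T κ (fun s t => ζ1 t - ζ1 s)
  hζ2 : Mem2 0 T κ (fun s t => ζ2 t - ζ2 s)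
  hr : Mem2 0 T (3 * κ) r
  hρ : Mem2 0 T (2 * κ) ρ
  decomp : ∀ s ∈ Icc (0 : ℝ) T, ∀ t ∈ Icc (0 : ℝ) T, ∀ i,
    z t i - z s i = (∑ j, ζ1 s i j * (x t j - x s j))
      + (∑ j, ∑ k, ζ2 s i j k * x2 s t k j) + r s t i
  decompζ : ∀ s ∈ Icc (0 : ℝ) T, ∀ t ∈ Icc (0 : ℝ) T, ∀ i j,
    ζ1 t i j - ζ1 s i j = (∑ k, ζ2 s i j k * (x t k - x s k)) + ρ s t i j

/-- The natural semi-norm `N[z; Q_{κ,a,b}]` on weakly controlled paths. -/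
def QNorm (T κ : ℝ) {d l : ℕ}
    (z : ℝ → Fin l → ℝ) (ζ1 : ℝ → Fin l → Fin d → ℝ) (ζ2 : ℝ → Fin l → Fin d → Fin d → ℝ)
    (r : ℝ → ℝ → Fin l → ℝ) (ρ : ℝ → ℝ → Fin l → Fin d → ℝ) : ℝ :=
  HNorm2 0 T κ (fun s t => z t - z s)
    + SupNorm 0 T ζ1 + HNorm2 0 T κ (fun s t => ζ1 t - ζ1 s)
    + SupNorm 0 T ζ2 + HNorm2 0 T κ (fun s t => ζ2 t - ζ2 s)
    + HNorm2 0 T (2 * κ) ρ + HNorm2 0 T (3 * κ) r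

/-- `φ ∈ C_b^N`: `N` times continuously differentiable, bounded with bounded derivatives. -/
def CbN {E F : Type*} [NormedAddCommGroup E] [NormedSpace ℝ E]
    [NormedAddCommGroup F] [NormedSpace ℝ F] (N : ℕ) (φ : E → F) : Prop :=
  ContDiff ℝ N φ ∧ ∀ i : ℕ, i ≤ N → ∃ C, ∀ y, ‖iteratedFDeriv ℝ i φ y‖ ≤ C

/-- Partial derivative `∂ᵢφ(y)`. -/
def pd {l : ℕ} (φ : (Fin l → ℝ) → ℝ) (y : Fin l → ℝ) (i : Fin l) : ℝ :=
  fderiv ℝ φ y (Pi.single i 1)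

/-- Second partial derivative `∂²_{i₁ i₂}φ(y)`. -/
def pd2 {l : ℕ} (φ : (Fin l → ℝ) → ℝ) (y : Fin l → ℝ) (i₁ i₂ : Fin l) : ℝ :=
  fderiv ℝ (fun w => fderiv ℝ φ w (Pi.single i₁ 1)) y (Pi.single i₂ 1)

/-!
With `D₁ = Dφ` and `D₂ = D²φ` on the sup-normed space `ℝ^l`, the coefficients read
`ζ̂¹ = D₁(z) ζ¹` and `ζ̂² = D₁(z) ζ² + D₂(z)(ζ¹, ζ¹)`. Put `A = ζ¹_s δx_{st}`, so that
`δz - A = ζ²_s x²_{st} + r_{st}` is of order `|t - s|^{2κ}`. Then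
`ρ̂ = [D₁(z_t) - D₁(z_s) - D₂(z_s) δz] ζ¹_t + D₂(z_s)(δz, δζ¹) + D₂(z_s)(δz - A, ζ¹_s) + D₁(z_s) ρ`,
and, since geometricity (X2) and the symmetry of `D₂` turn `∑ D₂(z_s)(ζ¹, ζ¹) x²` into
`½ D₂(z_s)(A, A)`, `r̂` is the third-order Taylor remainder of `φ` between `z_s` and `z_t`, plus
`D₁(z_s) r`, plus `½ [D₂(z_s)(δz, δz) - D₂(z_s)(A, A)]`. Every term is a product of at most three
factors controlled by `M = 1 + N[z; Q]`, which gives the cubic bound.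
-/

section HolderNorms

variable {a b μ κ C : ℝ}

lemma HNorm2_nonneg (f : ℝ → ℝ → V) : 0 ≤ HNorm2 a b μ f :=
  Real.sInf_nonneg fun _ hC => hC.1

lemma SupNorm_nonneg (g : ℝ → V) : 0 ≤ SupNorm a b g :=
  Real.sInf_nonneg fun _ hC => hC.1

lemma HNorm2_le {f : ℝ → ℝ → V} (hC : 0 ≤ C) (h : HBound2 a b μ C f) : HNorm2 a b μ f ≤ C :=
  csInf_le ⟨0, fun _ hD => hD.1⟩ ⟨hC, h⟩

lemma SupNorm_le {g : ℝ → V} (hC : 0 ≤ C) (h : ∀ t ∈ Icc a b, ‖g t‖ ≤ C) :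
    SupNorm a b g ≤ C :=
  csInf_le ⟨0, fun _ hD => hD.1⟩ ⟨hC, h⟩

lemma Mem2.hBound2_HNorm2 {f : ℝ → ℝ → V} (hf : Mem2 a b μ f) :
    HBound2 a b μ (HNorm2 a b μ f) f := by
  intro s hs t ht
  rcases (Real.rpow_nonneg (abs_nonneg (t - s)) μ).eq_or_lt with h0 | hpos
  · obtain ⟨C, -, hC⟩ := hf
    simpa [← h0] using hC s hs t ht
  · rw [← div_le_iff₀ hpos]
    exact le_csInf hf fun C hC => (div_le_iff₀ hpos).2 (hC.2 s hs t ht)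

lemma HBound2.mono {f : ℝ → ℝ → V} (h : HBound2 a b μ C f) {C' : ℝ} (hC : C ≤ C') :
    HBound2 a b μ C' f :=
  fun s hs t ht => (h s hs t ht).trans (by gcongr)

lemma norm_le_SupNorm {g : ℝ → V} (hg : ∃ C, 0 ≤ C ∧ ∀ t ∈ Icc a b, ‖g t‖ ≤ C)
    {t : ℝ} (ht : t ∈ Icc a b) : ‖g t‖ ≤ SupNorm a b g :=
  le_csInf hg fun _ hC => hC.2 t ht

lemma HBound2.mono_exponent {γ : ℝ} {f : ℝ → ℝ → V} (h : HBound2 a b γ C f) (hC : 0 ≤ C)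
    (hκ : 0 ≤ κ) (hκγ : κ ≤ γ) : HBound2 a b κ (C * (b - a) ^ (γ - κ)) f := by
  intro s hs t ht
  have hsplit : |t - s| ^ γ = |t - s| ^ (γ - κ) * |t - s| ^ κ := by
    rw [← Real.rpow_add_of_nonneg (abs_nonneg _) (by linarith) hκ, sub_add_cancel]
  calc ‖f s t‖ ≤ C * |t - s| ^ γ := h s hs t ht
    _ ≤ C * ((b - a) ^ (γ - κ) * |t - s| ^ κ) := by
      rw [hsplit]
      gcongr
      exact Real.dist_le_of_mem_Icc ht hs
    _ = C * (b - a) ^ (γ - κ) * |t - s| ^ κ := by ring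

lemma Mem2.exists_bound_of_sub {g : ℝ → V} (hg : Mem2 a b κ fun s t => g t - g s)
    (hκ : 0 ≤ κ) (hab : a ≤ b) : ∃ C, 0 ≤ C ∧ ∀ t ∈ Icc a b, ‖g t‖ ≤ C := by
  obtain ⟨C, hC, hbound⟩ := hg
  have ha : a ∈ Icc a b := ⟨le_rfl, hab⟩
  refine ⟨‖g a‖ + C * (b - a) ^ κ, by have := sub_nonneg.2 hab; positivity, fun t ht => ?_⟩
  have hincr : ‖g t - g a‖ ≤ C * (b - a) ^ κ :=
    (hbound a ha t ht).trans <| by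
      gcongr
      exact Real.dist_le_of_mem_Icc ht ha
  calc ‖g t‖ ≤ ‖g a‖ + ‖g t - g a‖ := norm_le_insert' _ _
    _ ≤ _ := by linarith

lemma abs_sub_rpow_two_mul (s t : ℝ) : |t - s| ^ (2 * κ) = (|t - s| ^ κ) ^ 2 := by
  rw [mul_comm]
  exact_mod_cast Real.rpow_mul_natCast (abs_nonneg (t - s)) κ 2

lemma abs_sub_rpow_three_mul (s t : ℝ) : |t - s| ^ (3 * κ) = (|t - s| ^ κ) ^ 3 := by
  rw [mul_comm]
  exact_mod_cast Real.rpow_mul_natCast (abs_nonneg (t - s)) κ 3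

end HolderNorms

section PiNorms

variable {ι ι' : Type*} [Fintype ι] [Fintype ι']

lemma norm_apply_apply_le {E : Type*} [SeminormedAddCommGroup E] (f : ι → ι' → E) (j : ι') :
    ‖fun i => f i j‖ ≤ ‖f‖ :=
  pi_norm_le_iff_of_nonneg (norm_nonneg f) |>.2 fun i =>
    (norm_le_pi_norm (f i) j).trans (norm_le_pi_norm f i)

lemma norm_apply_apply_apply_le {ι'' E : Type*} [Fintype ι''] [SeminormedAddCommGroup E]
    (f : ι → ι' → ι'' → E) (j : ι') (k : ι'') : ‖fun i => f i j k‖ ≤ ‖f‖ :=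
  (norm_apply_apply_le (fun i => f i j) k).trans (norm_apply_apply_le f j)

lemma abs_sum_mul_le (f v : ι → ℝ) : |∑ j, f j * v j| ≤ Fintype.card ι * (‖f‖ * ‖v‖) := by
  calc |∑ j, f j * v j| ≤ ∑ j, |f j| * |v j| := by
        simpa only [abs_mul] using Finset.abs_sum_le_sum_abs (fun j => f j * v j) Finset.univ
    _ ≤ ∑ _j : ι, ‖f‖ * ‖v‖ := by
        gcongr with j
        · exact norm_le_pi_norm f j
        · exact norm_le_pi_norm v j
    _ = Fintype.card ι * (‖f‖ * ‖v‖) := by simp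

lemma norm_sum_mul_le (f : ι' → ι → ℝ) (v : ι → ℝ) :
    ‖fun i => ∑ j, f i j * v j‖ ≤ Fintype.card ι * (‖f‖ * ‖v‖) := by
  refine pi_norm_le_iff_of_nonneg (by positivity) |>.2 fun i => ?_
  rw [Real.norm_eq_abs]
  exact (abs_sum_mul_le (f i) v).trans (by gcongr; exact norm_le_pi_norm f i)

lemma norm_sum_sum_mul_le (f : ι' → ι → ι → ℝ) (m : ι → ι → ℝ) :
    ‖fun i => ∑ j, ∑ k, f i j k * m k j‖
      ≤ Fintype.card ι * (Fintype.card ι * (‖f‖ * ‖m‖)) := by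
  refine pi_norm_le_iff_of_nonneg (by positivity) |>.2 fun i => ?_
  rw [Real.norm_eq_abs]
  refine (Finset.abs_sum_le_sum_abs _ _).trans ?_
  calc ∑ j, |∑ k, f i j k * m k j| ≤ ∑ _j : ι, Fintype.card ι * (‖f‖ * ‖m‖) := by
        gcongr with j
        refine (abs_sum_mul_le (f i j) fun k => m k j).trans ?_
        gcongr
        · exact (norm_le_pi_norm (f i) j).trans (norm_le_pi_norm f i)
        · exact norm_apply_apply_le m j
    _ = _ := by simp

end PiNorms

lemma mul_pow_mul_pow_le {B M c : ℝ} (hB : 1 ≤ B) (hM : 1 ≤ M) (hc : 0 ≤ c) {i j i' j' : ℕ}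
    (hi : i ≤ i') (hj : j ≤ j') : c * B ^ i * M ^ j ≤ c * B ^ i' * M ^ j' := by
  gcongr

section Taylor

variable {E F : Type*} [NormedAddCommGroup E] [NormedSpace ℝ E]
  [NormedAddCommGroup F] [NormedSpace ℝ F]

lemma norm_image_sub_sub_fderiv_le {f : E → F} {f' : E → E →L[ℝ] F}
    (hf : ∀ y, HasFDerivAt f (f' y) y) {K : ℝ} (hK : 0 ≤ K)
    (hlip : ∀ v w, ‖f' w - f' v‖ ≤ K * ‖w - v‖) (x y : E) :
    ‖f y - f x - f' x (y - x)‖ ≤ K * ‖y - x‖ ^ 2 := by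
  set g : E → F := fun w => f w - f' x w
  have hg : ∀ w, HasFDerivAt g (f' w - f' x) w := fun w => (hf w).sub (f' x).hasFDerivAt
  have key := Convex.norm_image_sub_le_of_norm_hasFDerivWithin_le
    (fun w _ => (hg w).hasFDerivWithinAt) (fun w hw => (hlip x w).trans
      (mul_le_mul_of_nonneg_left (norm_sub_le_of_mem_segment hw) hK))
    (convex_segment x y) (left_mem_segment ℝ x y) (right_mem_segment ℝ x y)
  have hgxy : g y - g x = f y - f x - f' x (y - x) := by simp only [g, map_sub]; abel
  rw [hgxy] at key
  linarith

lemma norm_image_sub_sub_fderiv_sub_half_le {f : E → F} {f' : E → E →L[ℝ] F}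
    {f'' : E → E →L[ℝ] E →L[ℝ] F} (hf : ∀ y, HasFDerivAt f (f' y) y)
    (hf' : ∀ y, HasFDerivAt f' (f'' y) y) {K : ℝ} (hK : 0 ≤ K)
    (hlip : ∀ v w, ‖f'' w - f'' v‖ ≤ K * ‖w - v‖) (x y : E) :
    ‖f y - f x - f' x (y - x) - (1 / 2 : ℝ) • f'' x (y - x) (y - x)‖ ≤ K * ‖y - x‖ ^ 3 := by
  set B := f'' x
  have hsymm : ∀ v w, B v w = B w v := second_derivative_symmetric hf (hf' x)
  have hquad : ∀ w, HasFDerivAt (fun w => (1 / 2 : ℝ) • B (w - x) (w - x)) (B (w - x)) w := by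
    intro w
    have hsub : HasFDerivAt (fun w : E => w - x) (ContinuousLinearMap.id ℝ E) w :=
      (hasFDerivAt_id w).sub_const x
    convert (B.hasFDerivAt_of_bilinear hsub hsub).const_smul (1 / 2 : ℝ) using 1
    · rfl
    ext v
    simp only [smul_apply, add_apply,
      ContinuousLinearMap.precompR_apply, ContinuousLinearMap.precompL_apply,
      ContinuousLinearMap.compL_apply, ContinuousLinearMap.comp_id,
      ContinuousLinearMap.id_apply, hsymm v (w - x)]
    module
  set g : E → F := fun w => f w - f' x w - (1 / 2 : ℝ) • B (w - x) (w - x)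
  have hg : ∀ w, HasFDerivAt g (f' w - f' x - B (w - x)) w :=
    fun w => ((hf w).sub (f' x).hasFDerivAt).sub (hquad w)
  have key := Convex.norm_image_sub_le_of_norm_hasFDerivWithin_le
    (fun w _ => (hg w).hasFDerivWithinAt) (fun w hw =>
      (norm_image_sub_sub_fderiv_le hf' hK hlip x w).trans
        (mul_le_mul_of_nonneg_left (pow_le_pow_left₀ (norm_nonneg _)
          (norm_sub_le_of_mem_segment hw) 2) hK))
    (convex_segment x y) (left_mem_segment ℝ x y) (right_mem_segment ℝ x y)
  have hgxy : g y - g x = f y - f x - f' x (y - x) - (1 / 2 : ℝ) • B (y - x) (y - x) := by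
    simp only [g, map_sub, sub_self, zero_apply, smul_zero]
    abel
  rw [hgxy] at key
  linarith

end Taylor

section DerivBounds

variable {E F : Type*} [NormedAddCommGroup E] [NormedSpace ℝ E]
  [NormedAddCommGroup F] [NormedSpace ℝ F]

structure DerivBounds (φ : E → F) (B : ℝ) : Prop where
  contDiff : ContDiff ℝ 2 φ
  norm_fderiv_le : ∀ y, ‖fderiv ℝ φ y‖ ≤ B
  norm_fderiv_fderiv_le : ∀ y, ‖fderiv ℝ (fderiv ℝ φ) y‖ ≤ B
  norm_fderiv_fderiv_sub_le :
    ∀ y w, ‖fderiv ℝ (fderiv ℝ φ) w - fderiv ℝ (fderiv ℝ φ) y‖ ≤ B * ‖w - y‖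

namespace DerivBounds

variable {φ : E → F} {B : ℝ}

lemma nonneg (h : DerivBounds φ B) : 0 ≤ B :=
  (norm_nonneg _).trans (h.norm_fderiv_le 0)

lemma mono (h : DerivBounds φ B) {B' : ℝ} (hB : B ≤ B') : DerivBounds φ B' where
  contDiff := h.contDiff
  norm_fderiv_le y := (h.norm_fderiv_le y).trans hB
  norm_fderiv_fderiv_le y := (h.norm_fderiv_fderiv_le y).trans hB
  norm_fderiv_fderiv_sub_le y w :=
    (h.norm_fderiv_fderiv_sub_le y w).trans (by gcongr)

lemma differentiable (h : DerivBounds φ B) : Differentiable ℝ φ :=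
  h.contDiff.differentiable (by norm_num)

lemma differentiable_fderiv (h : DerivBounds φ B) : Differentiable ℝ (fderiv ℝ φ) :=
  (h.contDiff.fderiv_right (m := 1) (by norm_num)).differentiable (by norm_num)

lemma norm_sub_le (h : DerivBounds φ B) (y w : E) : ‖φ w - φ y‖ ≤ B * ‖w - y‖ :=
  convex_univ.norm_image_sub_le_of_norm_fderiv_le (fun v _ => h.differentiable v)
    (fun v _ => h.norm_fderiv_le v) (mem_univ y) (mem_univ w)

lemma norm_fderiv_sub_le (h : DerivBounds φ B) (y w : E) :
    ‖fderiv ℝ φ w - fderiv ℝ φ y‖ ≤ B * ‖w - y‖ :=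
  convex_univ.norm_image_sub_le_of_norm_fderiv_le (fun v _ => h.differentiable_fderiv v)
    (fun v _ => h.norm_fderiv_fderiv_le v) (mem_univ y) (mem_univ w)

lemma norm_fderiv_sub_sub_le (h : DerivBounds φ B) (y w : E) :
    ‖fderiv ℝ φ w - fderiv ℝ φ y - fderiv ℝ (fderiv ℝ φ) y (w - y)‖ ≤ B * ‖w - y‖ ^ 2 :=
  norm_image_sub_sub_fderiv_le (fun v => (h.differentiable_fderiv v).hasFDerivAt) h.nonneg
    h.norm_fderiv_fderiv_sub_le y w

lemma norm_taylor_le (h : DerivBounds φ B) (y w : E) :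
    ‖φ w - φ y - fderiv ℝ φ y (w - y)
      - (1 / 2 : ℝ) • fderiv ℝ (fderiv ℝ φ) y (w - y) (w - y)‖ ≤ B * ‖w - y‖ ^ 3 :=
  norm_image_sub_sub_fderiv_sub_half_le (fun v => (h.differentiable v).hasFDerivAt)
    (fun v => (h.differentiable_fderiv v).hasFDerivAt) h.nonneg
    h.norm_fderiv_fderiv_sub_le y w

end DerivBounds

lemma CbN.exists_derivBounds {φ : E → F} (hφ : CbN 3 φ) : ∃ B, DerivBounds φ B := by
  obtain ⟨hcd, hbd⟩ := hφ
  obtain ⟨C₁, hC₁⟩ := hbd 1 (by norm_num)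
  obtain ⟨C₂, hC₂⟩ := hbd 2 (by norm_num)
  obtain ⟨C₃, hC₃⟩ := hbd 3 (by norm_num)
  have hD₂ : ∀ y, ‖fderiv ℝ (fderiv ℝ φ) y‖ = ‖iteratedFDeriv ℝ 2 φ y‖ := fun y => by
    rw [← norm_iteratedFDeriv_one, norm_iteratedFDeriv_fderiv]
  -- instance search does not find the norm on third-order maps unaided
  let _ : NormedAddCommGroup (E →L[ℝ] E →L[ℝ] F) := inferInstance
  let _ : NormedSpace ℝ (E →L[ℝ] E →L[ℝ] F) := inferInstance
  have hD₃ : ∀ y, ‖fderiv ℝ (fderiv ℝ (fderiv ℝ φ)) y‖ = ‖iteratedFDeriv ℝ 3 φ y‖ := fun y => by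
    rw [← norm_iteratedFDeriv_one, norm_iteratedFDeriv_fderiv, norm_iteratedFDeriv_fderiv]
  have hD₂diff : Differentiable ℝ (fderiv ℝ (fderiv ℝ φ)) :=
    ((hcd.fderiv_right (m := 2) (by norm_num)).fderiv_right (m := 1) (by norm_num)).differentiable
      (by norm_num)
  refine ⟨max C₁ (max C₂ C₃), hcd.of_le (by norm_num), fun y => ?_, fun y => ?_, fun y w => ?_⟩
  · rw [← norm_iteratedFDeriv_one]
    exact (hC₁ y).trans (le_max_left _ _)
  · rw [hD₂]
    exact (hC₂ y).trans ((le_max_left _ _).trans (le_max_right _ _))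
  · refine convex_univ.norm_image_sub_le_of_norm_fderiv_le (fun v _ => hD₂diff v) (fun v _ => ?_)
      (mem_univ y) (mem_univ w)
    rw [hD₃]
    exact (hC₃ v).trans ((le_max_right _ _).trans (le_max_right _ _))

end DerivBounds

section Coordinates

variable {ι : Type*} {F : Type*} [AddCommMonoid F] [Module ℝ F] [TopologicalSpace F]

lemma sum_apply_single_mul [Fintype ι] [DecidableEq ι] (L : (ι → ℝ) →L[ℝ] ℝ) (v : ι → ℝ) :
    ∑ i, L (Pi.single i 1) * v i = L v := by
  conv_rhs => rw [pi_eq_sum_univ' v, map_sum]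
  simp [mul_comm]

lemma sum_smul_apply (L : (ι → ℝ) →L[ℝ] F) {κ : Type*} [Fintype κ] (c : κ → ι → ℝ)
    (a : κ → ℝ) : ∑ k, a k • L (c k) = L fun i => ∑ k, c k i * a k := by
  have hc : (fun i => ∑ k, c k i * a k) = ∑ k, a k • c k := by
    ext i
    simp [mul_comm]
  simp [hc, map_sum]

lemma sum_apply_mul (L : (ι → ℝ) →L[ℝ] ℝ) {κ : Type*} [Fintype κ] (c : κ → ι → ℝ)
    (a : κ → ℝ) : ∑ k, L (c k) * a k = L fun i => ∑ k, c k i * a k := by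
  simp only [← sum_smul_apply, smul_eq_mul, mul_comm]

lemma sum_sum_apply_mul (L : (ι → ℝ) →L[ℝ] ℝ) {κ κ' : Type*} [Fintype κ] [Fintype κ']
    (c : κ → κ' → ι → ℝ) (m : κ → κ' → ℝ) :
    ∑ j, ∑ k, L (c j k) * m j k = L fun i => ∑ j, ∑ k, c j k i * m j k := by
  have hc : (fun i => ∑ j, ∑ k, c j k i * m j k) = ∑ j, fun i => ∑ k, c j k i * m j k := by
    ext i
    simp
  simp only [sum_apply_mul, hc, map_sum]

lemma sum_sum_mul_eq_half_of_symm (β : (ι → ℝ) →L[ℝ] (ι → ℝ) →L[ℝ] ℝ)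
    (hβ : ∀ u v, β u v = β v u) {κ : Type*} [Fintype κ] (c : κ → ι → ℝ) (a : κ → ℝ)
    (m : κ → κ → ℝ) (hm : ∀ j k, m k j + m j k = a k * a j) :
    ∑ j, ∑ k, β (c k) (c j) * m k j
      = (1 / 2 : ℝ) * β (fun i => ∑ k, c k i * a k) (fun i => ∑ k, c k i * a k) := by
  have hswap : ∑ j, ∑ k, β (c k) (c j) * m k j = ∑ j, ∑ k, β (c k) (c j) * m j k := by
    rw [Finset.sum_comm]
    simp only [hβ]
  have hfull : ∑ j, ∑ k, β (c k) (c j) * (a k * a j)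
      = β (fun i => ∑ k, c k i * a k) (fun i => ∑ k, c k i * a k) := by
    rw [← sum_smul_apply β c a]
    simp only [sum_apply, smul_apply, smul_eq_mul, ← sum_smul_apply (β _) c a, Finset.mul_sum]
    rw [Finset.sum_comm]
    exact Finset.sum_congr rfl fun _ _ => Finset.sum_congr rfl fun _ _ => by ring
  rw [← hfull]
  simp only [← hm, mul_add, Finset.sum_add_distrib]
  linarith

end Coordinates

section PartialDerivatives

variable {l : ℕ}

lemma sum_pd_mul (φ : (Fin l → ℝ) → ℝ) (y v : Fin l → ℝ) :
    ∑ i, pd φ y i * v i = fderiv ℝ φ y v :=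
  sum_apply_single_mul _ v

lemma sum_pd2_mul_mul {φ : (Fin l → ℝ) → ℝ} {y : Fin l → ℝ} (hφ : DifferentiableAt ℝ (fderiv ℝ φ) y)
    (u v : Fin l → ℝ) :
    ∑ i₁, ∑ i₂, pd2 φ y i₁ i₂ * u i₁ * v i₂ = fderiv ℝ (fderiv ℝ φ) y v u := by
  have hpd2 : ∀ i₁ i₂, pd2 φ y i₁ i₂
      = fderiv ℝ (fderiv ℝ φ) y (Pi.single i₂ 1) (Pi.single i₁ 1) := fun i₁ i₂ => by
    rw [pd2, fderiv_clm_apply hφ (differentiableAt_const _)]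
    simp
  set β := fderiv ℝ (fderiv ℝ φ) y
  calc ∑ i₁, ∑ i₂, pd2 φ y i₁ i₂ * u i₁ * v i₂
      = ∑ i₁, (∑ i₂, β.flip (Pi.single i₁ 1) (Pi.single i₂ 1) * v i₂) * u i₁ := by
        simp only [hpd2, Finset.sum_mul, ContinuousLinearMap.flip_apply, mul_right_comm _ (u _)]
    _ = β v u := by
        simp only [sum_apply_single_mul]
        simp only [ContinuousLinearMap.flip_apply, sum_apply_single_mul]

end PartialDerivatives

section PathBounds

variable {T κ B M : ℝ} {d l : ℕ}

structure DriverBounds (T κ B : ℝ) (x : ℝ → Fin d → ℝ) (x2 : ℝ → ℝ → Fin d → Fin d → ℝ) :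
    Prop where
  one_le : 1 ≤ B
  dim_le : (d : ℝ) ≤ B
  rpow_abs_sub_le : ∀ s ∈ Icc (0 : ℝ) T, ∀ t ∈ Icc (0 : ℝ) T, |t - s| ^ κ ≤ B
  norm_sub_le : ∀ s ∈ Icc (0 : ℝ) T, ∀ t ∈ Icc (0 : ℝ) T, ‖x t - x s‖ ≤ B * |t - s| ^ κ
  norm_area_le : ∀ s ∈ Icc (0 : ℝ) T, ∀ t ∈ Icc (0 : ℝ) T, ‖x2 s t‖ ≤ B * (|t - s| ^ κ) ^ 2

structure PathBounds (T κ M : ℝ) (z : ℝ → Fin l → ℝ) (ζ1 : ℝ → Fin l → Fin d → ℝ)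
    (ζ2 : ℝ → Fin l → Fin d → Fin d → ℝ) (r : ℝ → ℝ → Fin l → ℝ)
    (ρ : ℝ → ℝ → Fin l → Fin d → ℝ) : Prop where
  one_le : 1 ≤ M
  norm_sub_le : ∀ s ∈ Icc (0 : ℝ) T, ∀ t ∈ Icc (0 : ℝ) T, ‖z t - z s‖ ≤ M * |t - s| ^ κ
  norm_ζ1_le : ∀ t ∈ Icc (0 : ℝ) T, ‖ζ1 t‖ ≤ M
  norm_ζ1_sub_le : ∀ s ∈ Icc (0 : ℝ) T, ∀ t ∈ Icc (0 : ℝ) T, ‖ζ1 t - ζ1 s‖ ≤ M * |t - s| ^ κ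
  norm_ζ2_le : ∀ t ∈ Icc (0 : ℝ) T, ‖ζ2 t‖ ≤ M
  norm_ζ2_sub_le : ∀ s ∈ Icc (0 : ℝ) T, ∀ t ∈ Icc (0 : ℝ) T, ‖ζ2 t - ζ2 s‖ ≤ M * |t - s| ^ κ
  norm_ρ_le : ∀ s ∈ Icc (0 : ℝ) T, ∀ t ∈ Icc (0 : ℝ) T, ‖ρ s t‖ ≤ M * (|t - s| ^ κ) ^ 2
  norm_r_le : ∀ s ∈ Icc (0 : ℝ) T, ∀ t ∈ Icc (0 : ℝ) T, ‖r s t‖ ≤ M * (|t - s| ^ κ) ^ 3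

lemma DriverBounds.mono {x : ℝ → Fin d → ℝ} {x2 : ℝ → ℝ → Fin d → Fin d → ℝ}
    (h : DriverBounds T κ B x x2) {B' : ℝ} (hB : B ≤ B') : DriverBounds T κ B' x x2 where
  one_le := h.one_le.trans hB
  dim_le := h.dim_le.trans hB
  rpow_abs_sub_le s hs t ht := (h.rpow_abs_sub_le s hs t ht).trans hB
  norm_sub_le s hs t ht := (h.norm_sub_le s hs t ht).trans (by gcongr)
  norm_area_le s hs t ht := (h.norm_area_le s hs t ht).trans (by gcongr)

lemma HypX1.exists_driverBounds {γ : ℝ} {x : ℝ → Fin d → ℝ}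
    {x2 : ℝ → ℝ → Fin d → Fin d → ℝ} {x3 : ℝ → ℝ → Fin d → Fin d → Fin d → ℝ}
    (hX1 : HypX1 T γ d x x2 x3) (hκ : 0 ≤ κ) (hκγ : κ ≤ γ) :
    ∃ B, DriverBounds T κ B x x2 := by
  obtain ⟨C₁, hC₁, hx⟩ := hX1.hx
  obtain ⟨C₂, hC₂, hx2⟩ := hX1.hx2
  have hx' := hx.mono_exponent hC₁ hκ hκγ
  have hx2' := hx2.mono_exponent hC₂ (by positivity) (by linarith : 2 * κ ≤ 2 * γ)
  rw [sub_zero] at hx' hx2'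
  refine ⟨max (max 1 d) (max (T ^ κ) (max (C₁ * T ^ (γ - κ)) (C₂ * T ^ (2 * γ - 2 * κ)))),
    by simp, by simp, fun s hs t ht => ?_, fun s hs t ht => (hx' s hs t ht).trans ?_,
    fun s hs t ht => (hx2' s hs t ht).trans ?_⟩
  · calc |t - s| ^ κ ≤ T ^ κ := by
          gcongr
          exact (Real.dist_le_of_mem_Icc ht hs).trans_eq (sub_zero T)
      _ ≤ _ := by simp
  · gcongr
    simp
  · rw [← abs_sub_rpow_two_mul]
    gcongr
    simp

lemma WCP.pathBounds {x : ℝ → Fin d → ℝ} {x2 : ℝ → ℝ → Fin d → Fin d → ℝ} {a : Fin l → ℝ}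
    {b : Fin l → Fin d → ℝ} {z : ℝ → Fin l → ℝ} {ζ1 : ℝ → Fin l → Fin d → ℝ}
    {ζ2 : ℝ → Fin l → Fin d → Fin d → ℝ} {r : ℝ → ℝ → Fin l → ℝ}
    {ρ : ℝ → ℝ → Fin l → Fin d → ℝ} (hw : WCP T κ x x2 a b z ζ1 ζ2 r ρ) (hT : 0 ≤ T)
    (hκ : 0 ≤ κ) : PathBounds T κ (1 + QNorm T κ z ζ1 ζ2 r ρ) z ζ1 ζ2 r ρ := by
  have hN : QNorm T κ z ζ1 ζ2 r ρ = HNorm2 0 T κ (fun s t => z t - z s)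
      + SupNorm 0 T ζ1 + HNorm2 0 T κ (fun s t => ζ1 t - ζ1 s)
      + SupNorm 0 T ζ2 + HNorm2 0 T κ (fun s t => ζ2 t - ζ2 s)
      + HNorm2 0 T (2 * κ) ρ + HNorm2 0 T (3 * κ) r := rfl
  have := HNorm2_nonneg (a := 0) (b := T) (μ := κ) fun s t => z t - z s
  have := HNorm2_nonneg (a := 0) (b := T) (μ := κ) fun s t => ζ1 t - ζ1 s
  have := HNorm2_nonneg (a := 0) (b := T) (μ := κ) fun s t => ζ2 t - ζ2 s
  have := HNorm2_nonneg (a := 0) (b := T) (μ := 2 * κ) ρ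
  have := HNorm2_nonneg (a := 0) (b := T) (μ := 3 * κ) r
  have := SupNorm_nonneg (a := 0) (b := T) ζ1
  have := SupNorm_nonneg (a := 0) (b := T) ζ2
  refine ⟨by linarith, hw.hz.hBound2_HNorm2.mono (by linarith),
    fun t ht => (norm_le_SupNorm (hw.hζ1.exists_bound_of_sub hκ hT) ht).trans (by linarith),
    hw.hζ1.hBound2_HNorm2.mono (by linarith),
    fun t ht => (norm_le_SupNorm (hw.hζ2.exists_bound_of_sub hκ hT) ht).trans (by linarith),
    hw.hζ2.hBound2_HNorm2.mono (by linarith), fun s hs t ht => ?_, fun s hs t ht => ?_⟩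
  · rw [← abs_sub_rpow_two_mul]
    exact hw.hρ.hBound2_HNorm2.mono (by linarith) s hs t ht
  · rw [← abs_sub_rpow_three_mul]
    exact hw.hr.hBound2_HNorm2.mono (by linarith) s hs t ht

end PathBounds

section Composition

variable {d l : ℕ} (φ : (Fin l → ℝ) → ℝ) (x : ℝ → Fin d → ℝ)
  (x2 : ℝ → ℝ → Fin d → Fin d → ℝ) (z : ℝ → Fin l → ℝ) (ζ1 : ℝ → Fin l → Fin d → ℝ)
  (ζ2 : ℝ → Fin l → Fin d → Fin d → ℝ)

def composedPath : ℝ → Fin 1 → ℝ := fun t _ => φ (z t)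

def composedζ1 : ℝ → Fin 1 → Fin d → ℝ := fun t _ j => ∑ i, pd φ (z t) i * ζ1 t i j

def composedζ2 : ℝ → Fin 1 → Fin d → Fin d → ℝ := fun t _ j k =>
  (∑ i, pd φ (z t) i * ζ2 t i j k) + ∑ i₁, ∑ i₂, pd2 φ (z t) i₁ i₂ * ζ1 t i₁ j * ζ1 t i₂ k

def composedR : ℝ → ℝ → Fin 1 → ℝ := fun s t e => (φ (z t) - φ (z s))
  - (∑ j, composedζ1 φ z ζ1 s e j * (x t j - x s j))
  - ∑ j, ∑ k, composedζ2 φ z ζ1 ζ2 s e j k * x2 s t k j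

def composedρ : ℝ → ℝ → Fin 1 → Fin d → ℝ := fun s t e j =>
  (composedζ1 φ z ζ1 t e j - composedζ1 φ z ζ1 s e j)
    - ∑ k, composedζ2 φ z ζ1 ζ2 s e j k * (x t k - x s k)

variable {φ x x2 z ζ1 ζ2}

lemma composedζ1_apply (t : ℝ) (e : Fin 1) (j : Fin d) :
    composedζ1 φ z ζ1 t e j = fderiv ℝ φ (z t) (ζ1 t · j) :=
  sum_pd_mul φ _ _

lemma composedζ2_apply (hφ : Differentiable ℝ (fderiv ℝ φ)) (t : ℝ) (e : Fin 1) (j k : Fin d) :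
    composedζ2 φ z ζ1 ζ2 t e j k
      = fderiv ℝ φ (z t) (ζ2 t · j k) + fderiv ℝ (fderiv ℝ φ) (z t) (ζ1 t · k) (ζ1 t · j) := by
  rw [composedζ2, sum_pd_mul, sum_pd2_mul_mul (hφ _)]

end Composition

section CompositionIdentities

variable {T κ : ℝ} {d l : ℕ} {φ : (Fin l → ℝ) → ℝ} {x : ℝ → Fin d → ℝ}
  {x2 : ℝ → ℝ → Fin d → Fin d → ℝ} {a : Fin l → ℝ} {b : Fin l → Fin d → ℝ}
  {z : ℝ → Fin l → ℝ} {ζ1 : ℝ → Fin l → Fin d → ℝ} {ζ2 : ℝ → Fin l → Fin d → Fin d → ℝ}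
  {r : ℝ → ℝ → Fin l → ℝ} {ρ : ℝ → ℝ → Fin l → Fin d → ℝ} {s t : ℝ}

lemma composedρ_apply (hφ : Differentiable ℝ (fderiv ℝ φ))
    (hw : WCP T κ x x2 a b z ζ1 ζ2 r ρ) (hs : s ∈ Icc 0 T) (ht : t ∈ Icc 0 T)
    (e : Fin 1) (j : Fin d) :
    composedρ φ x z ζ1 ζ2 s t e j
      = (fderiv ℝ φ (z t) - fderiv ℝ φ (z s) - fderiv ℝ (fderiv ℝ φ) (z s) (z t - z s))
          (ζ1 t · j)
        + fderiv ℝ (fderiv ℝ φ) (z s) (z t - z s) ((ζ1 t · j) - (ζ1 s · j))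
        + fderiv ℝ (fderiv ℝ φ) (z s)
            (z t - z s - fun i => ∑ k, ζ1 s i k * (x t k - x s k)) (ζ1 s · j)
        + fderiv ℝ φ (z s) (ρ s t · j) := by
  set D₁ := fderiv ℝ φ (z s)
  set D₂ := fderiv ℝ (fderiv ℝ φ) (z s)
  set e' : Fin l → ℝ := fun i => ∑ k, ζ2 s i j k * (x t k - x s k)
  have hsum : ∑ k, composedζ2 φ z ζ1 ζ2 s e j k * (x t k - x s k)
      = D₁ e' + D₂ (fun i => ∑ k, ζ1 s i k * (x t k - x s k)) (ζ1 s · j) := by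
    simp only [composedζ2_apply hφ, add_mul, Finset.sum_add_distrib, sum_apply_mul]
    congr 1
    simpa using sum_apply_mul (D₂.flip (ζ1 s · j)) (fun k i => ζ1 s i k) (fun k => x t k - x s k)
  have hcol : (ζ1 t · j) = (ζ1 s · j) + e' + (ρ s t · j) := by
    ext i
    simp only [Pi.add_apply, e']
    linarith [hw.decompζ s hs t ht i j]
  have hD₁ : fderiv ℝ φ (z s) (ζ1 t · j) = D₁ (ζ1 s · j) + D₁ e' + D₁ (ρ s t · j) := by
    rw [hcol, map_add, map_add]
  rw [composedρ, composedζ1_apply, composedζ1_apply, hsum]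
  simp only [map_sub, sub_apply]
  linear_combination hD₁

lemma composedR_apply (hφ : ContDiff ℝ 2 φ) (hX2 : HypX2 T x x2)
    (hw : WCP T κ x x2 a b z ζ1 ζ2 r ρ) (hs : s ∈ Icc 0 T) (ht : t ∈ Icc 0 T) (e : Fin 1) :
    composedR φ x x2 z ζ1 ζ2 s t e
      = (φ (z t) - φ (z s) - fderiv ℝ φ (z s) (z t - z s)
          - (1 / 2 : ℝ) * fderiv ℝ (fderiv ℝ φ) (z s) (z t - z s) (z t - z s))
        + fderiv ℝ φ (z s) (r s t)
        + (1 / 2 : ℝ) * (fderiv ℝ (fderiv ℝ φ) (z s)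
            (z t - z s - fun i => ∑ k, ζ1 s i k * (x t k - x s k)) (z t - z s)
          + fderiv ℝ (fderiv ℝ φ) (z s) (fun i => ∑ k, ζ1 s i k * (x t k - x s k))
            (z t - z s - fun i => ∑ k, ζ1 s i k * (x t k - x s k))) := by
  have hφ' : Differentiable ℝ (fderiv ℝ φ) :=
    (hφ.fderiv_right (m := 1) (by norm_num)).differentiable (by norm_num)
  set D₁ := fderiv ℝ φ (z s)
  set D₂ := fderiv ℝ (fderiv ℝ φ) (z s)
  set A : Fin l → ℝ := fun i => ∑ k, ζ1 s i k * (x t k - x s k)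
  set Bv : Fin l → ℝ := fun i => ∑ j, ∑ k, ζ2 s i j k * x2 s t k j
  have hfirst : ∑ j, composedζ1 φ z ζ1 s e j * (x t j - x s j) = D₁ A := by
    simp only [composedζ1_apply]
    exact sum_apply_mul D₁ (fun j i => ζ1 s i j) (fun j => x t j - x s j)
  have hsecond : ∑ j, ∑ k, composedζ2 φ z ζ1 ζ2 s e j k * x2 s t k j
      = D₁ Bv + (1 / 2 : ℝ) * D₂ A A := by
    simp only [composedζ2_apply hφ', add_mul, Finset.sum_add_distrib, sum_sum_apply_mul]
    congr 1
    exact sum_sum_mul_eq_half_of_symm D₂ (hφ.contDiffAt.isSymmSndFDerivAt (by simp))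
      (fun k i => ζ1 s i k) (fun k => x t k - x s k) (fun k j => x2 s t k j)
      fun j k => hX2 s hs t ht k j
  have hincr : z t - z s = A + Bv + r s t := by
    ext i
    simp only [Pi.add_apply, Pi.sub_apply, A, Bv]
    exact hw.decomp s hs t ht i
  have hD₁ : D₁ (z t - z s) = D₁ A + D₁ Bv + D₁ (r s t) := by
    rw [hincr, map_add, map_add]
  have hD₂ : D₂ (z t - z s - A) (z t - z s) + D₂ A (z t - z s - A)
      = D₂ (z t - z s) (z t - z s) - D₂ A A := by
    simp only [map_sub, sub_apply]
    ring
  rw [composedR, hfirst, hsecond, hD₂]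
  linear_combination hD₁

end CompositionIdentities

section CompositionEstimates

variable {T κ B M : ℝ} {d l : ℕ} {φ : (Fin l → ℝ) → ℝ} {x : ℝ → Fin d → ℝ}
  {x2 : ℝ → ℝ → Fin d → Fin d → ℝ} {a : Fin l → ℝ} {b : Fin l → Fin d → ℝ}
  {z : ℝ → Fin l → ℝ} {ζ1 : ℝ → Fin l → Fin d → ℝ} {ζ2 : ℝ → Fin l → Fin d → Fin d → ℝ}
  {r : ℝ → ℝ → Fin l → ℝ} {ρ : ℝ → ℝ → Fin l → Fin d → ℝ} {s t : ℝ}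

lemma hBound2_composedPath (hφ : DerivBounds φ B) (hz : PathBounds T κ M z ζ1 ζ2 r ρ) :
    HBound2 0 T κ (B * M) fun s t => composedPath φ z t - composedPath φ z s := by
  intro s hs t ht
  refine pi_norm_le_iff_of_nonneg (by have := hφ.nonneg; have := hz.one_le; positivity)
    |>.2 fun _ => (hφ.norm_sub_le _ _).trans ?_
  rw [mul_assoc]
  gcongr
  · exact hφ.nonneg
  · exact hz.norm_sub_le s hs t ht

lemma norm_composedζ1_le (hφ : DerivBounds φ B) (hz : PathBounds T κ M z ζ1 ζ2 r ρ)
    (ht : t ∈ Icc 0 T) : ‖composedζ1 φ z ζ1 t‖ ≤ B * M := by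
  have hBM : 0 ≤ B * M := mul_nonneg hφ.nonneg (zero_le_one.trans hz.one_le)
  refine pi_norm_le_iff_of_nonneg hBM |>.2 fun e => pi_norm_le_iff_of_nonneg hBM |>.2 fun j => ?_
  rw [composedζ1_apply]
  exact (fderiv ℝ φ (z t)).le_of_opNorm_le_of_le (hφ.norm_fderiv_le _)
    ((norm_apply_apply_le _ j).trans (hz.norm_ζ1_le t ht))

lemma hBound2_composedζ1 (hφ : DerivBounds φ B) (hz : PathBounds T κ M z ζ1 ζ2 r ρ) :
    HBound2 0 T κ (2 * B * M ^ 2) fun s t => composedζ1 φ z ζ1 t - composedζ1 φ z ζ1 s := by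
  intro s hs t ht
  dsimp only
  have hB := hφ.nonneg
  have hM := hz.one_le
  have hC : 0 ≤ 2 * B * M ^ 2 * |t - s| ^ κ := by positivity
  refine pi_norm_le_iff_of_nonneg hC |>.2 fun e => pi_norm_le_iff_of_nonneg hC |>.2 fun j => ?_
  have hsplit : composedζ1 φ z ζ1 t e j - composedζ1 φ z ζ1 s e j
      = (fderiv ℝ φ (z t) - fderiv ℝ φ (z s)) (ζ1 t · j)
        + fderiv ℝ φ (z s) ((ζ1 t · j) - (ζ1 s · j)) := by
    simp only [composedζ1_apply, map_sub, sub_apply]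
    ring
  rw [Pi.sub_apply, Pi.sub_apply, hsplit]
  have h₁ := (fderiv ℝ φ (z t) - fderiv ℝ φ (z s)).le_of_opNorm_le_of_le
    ((hφ.norm_fderiv_sub_le _ _).trans (mul_le_mul_of_nonneg_left (hz.norm_sub_le s hs t ht) hB))
    ((norm_apply_apply_le _ j).trans (hz.norm_ζ1_le t ht))
  have h₂ : ‖fderiv ℝ φ (z s) ((ζ1 t · j) - (ζ1 s · j))‖ ≤ B * (M * |t - s| ^ κ) :=
    (fderiv ℝ φ (z s)).le_of_opNorm_le_of_le (hφ.norm_fderiv_le _)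
    ((norm_apply_apply_le (ζ1 t - ζ1 s) j).trans (hz.norm_ζ1_sub_le s hs t ht))
  refine (norm_add_le _ _).trans ?_
  linarith [mul_le_mul_of_nonneg_left (pow_le_pow_right₀ hM (by norm_num : 1 ≤ 2))
    (by positivity : 0 ≤ B * |t - s| ^ κ)]

lemma norm_composedζ2_le (hφ : DerivBounds φ B) (hz : PathBounds T κ M z ζ1 ζ2 r ρ)
    (ht : t ∈ Icc 0 T) : ‖composedζ2 φ z ζ1 ζ2 t‖ ≤ 2 * B * M ^ 2 := by
  have hB := hφ.nonneg
  have hM := hz.one_le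
  have hC : 0 ≤ 2 * B * M ^ 2 := by positivity
  refine pi_norm_le_iff_of_nonneg hC |>.2 fun e => pi_norm_le_iff_of_nonneg hC |>.2 fun j =>
    pi_norm_le_iff_of_nonneg hC |>.2 fun k => ?_
  rw [composedζ2_apply hφ.differentiable_fderiv]
  have h₁ := (fderiv ℝ φ (z t)).le_of_opNorm_le_of_le (hφ.norm_fderiv_le _)
    ((norm_apply_apply_apply_le _ j k).trans (hz.norm_ζ2_le t ht))
  have h₂ := (fderiv ℝ (fderiv ℝ φ) (z t)).le_of_opNorm₂_le_of_le (hφ.norm_fderiv_fderiv_le _)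
    ((norm_apply_apply_le _ k).trans (hz.norm_ζ1_le t ht))
    ((norm_apply_apply_le _ j).trans (hz.norm_ζ1_le t ht))
  refine (norm_add_le _ _).trans ?_
  linarith [mul_le_mul_of_nonneg_left (pow_le_pow_right₀ hM (by norm_num : 1 ≤ 2)) hB]

lemma hBound2_composedζ2 (hφ : DerivBounds φ B) (hz : PathBounds T κ M z ζ1 ζ2 r ρ) :
    HBound2 0 T κ (5 * B * M ^ 3) fun s t => composedζ2 φ z ζ1 ζ2 t - composedζ2 φ z ζ1 ζ2 s := by
  intro s hs t ht
  dsimp only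
  have hB := hφ.nonneg
  have hM := hz.one_le
  have hC : 0 ≤ 5 * B * M ^ 3 * |t - s| ^ κ := by positivity
  refine pi_norm_le_iff_of_nonneg hC |>.2 fun e => pi_norm_le_iff_of_nonneg hC |>.2 fun j =>
    pi_norm_le_iff_of_nonneg hC |>.2 fun k => ?_
  set D₁ := fderiv ℝ φ
  set D₂ := fderiv ℝ (fderiv ℝ φ)
  have hsplit : composedζ2 φ z ζ1 ζ2 t e j k - composedζ2 φ z ζ1 ζ2 s e j k
      = (D₁ (z t) - D₁ (z s)) (ζ2 t · j k) + D₁ (z s) ((ζ2 t · j k) - (ζ2 s · j k))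
        + (D₂ (z t) - D₂ (z s)) (ζ1 t · k) (ζ1 t · j)
        + D₂ (z s) ((ζ1 t · k) - (ζ1 s · k)) (ζ1 t · j)
        + D₂ (z s) (ζ1 s · k) ((ζ1 t · j) - (ζ1 s · j)) := by
    simp only [composedζ2_apply hφ.differentiable_fderiv, map_sub, sub_apply]
    ring
  rw [Pi.sub_apply, Pi.sub_apply, Pi.sub_apply, hsplit]
  have hδz := mul_le_mul_of_nonneg_left (hz.norm_sub_le s hs t ht) hB
  have h₁ := (D₁ (z t) - D₁ (z s)).le_of_opNorm_le_of_le
    ((hφ.norm_fderiv_sub_le _ _).trans hδz)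
    ((norm_apply_apply_apply_le _ j k).trans (hz.norm_ζ2_le t ht))
  have h₂ : ‖D₁ (z s) ((ζ2 t · j k) - (ζ2 s · j k))‖ ≤ B * (M * |t - s| ^ κ) :=
    (D₁ (z s)).le_of_opNorm_le_of_le (hφ.norm_fderiv_le _)
      ((norm_apply_apply_apply_le (ζ2 t - ζ2 s) j k).trans (hz.norm_ζ2_sub_le s hs t ht))
  have h₃ := (D₂ (z t) - D₂ (z s)).le_of_opNorm₂_le_of_le
    ((hφ.norm_fderiv_fderiv_sub_le _ _).trans hδz)
    ((norm_apply_apply_le _ k).trans (hz.norm_ζ1_le t ht))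
    ((norm_apply_apply_le _ j).trans (hz.norm_ζ1_le t ht))
  have h₄ : ‖D₂ (z s) ((ζ1 t · k) - (ζ1 s · k)) (ζ1 t · j)‖ ≤ B * (M * |t - s| ^ κ) * M :=
    (D₂ (z s)).le_of_opNorm₂_le_of_le (hφ.norm_fderiv_fderiv_le _)
      ((norm_apply_apply_le (ζ1 t - ζ1 s) k).trans (hz.norm_ζ1_sub_le s hs t ht))
      ((norm_apply_apply_le _ j).trans (hz.norm_ζ1_le t ht))
  have h₅ : ‖D₂ (z s) (ζ1 s · k) ((ζ1 t · j) - (ζ1 s · j))‖ ≤ B * M * (M * |t - s| ^ κ) :=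
    (D₂ (z s)).le_of_opNorm₂_le_of_le (hφ.norm_fderiv_fderiv_le _)
      ((norm_apply_apply_le _ k).trans (hz.norm_ζ1_le s hs))
      ((norm_apply_apply_le (ζ1 t - ζ1 s) j).trans (hz.norm_ζ1_sub_le s hs t ht))
  have hBτ : 0 ≤ B * |t - s| ^ κ := by positivity
  refine (norm_add_le _ _).trans ((add_le_add_left norm_add₄_le _).trans ?_)
  linarith [mul_le_mul_of_nonneg_left (pow_le_pow_right₀ hM (by norm_num : 1 ≤ 3)) hBτ,
    mul_le_mul_of_nonneg_left (pow_le_pow_right₀ hM (by norm_num : 2 ≤ 3)) hBτ]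

lemma norm_sum_ζ1_mul_le (hx : DriverBounds T κ B x x2) (hz : PathBounds T κ M z ζ1 ζ2 r ρ)
    (hs : s ∈ Icc 0 T) (ht : t ∈ Icc 0 T) :
    ‖fun i => ∑ k, ζ1 s i k * (x t k - x s k)‖ ≤ B ^ 2 * M * |t - s| ^ κ := by
  have hB := hx.one_le
  have hM := hz.one_le
  calc ‖fun i => ∑ k, ζ1 s i k * (x t k - x s k)‖ ≤ d * (‖ζ1 s‖ * ‖x t - x s‖) := by
        simpa using norm_sum_mul_le (ζ1 s) (x t - x s)
    _ ≤ B * (M * (B * |t - s| ^ κ)) := by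
        gcongr <;> first
          | linarith
          | exact hx.dim_le
          | exact hz.norm_ζ1_le s hs
          | exact hx.norm_sub_le s hs t ht
    _ = B ^ 2 * M * |t - s| ^ κ := by ring

lemma norm_sub_sub_sum_ζ1_mul_le (hw : WCP T κ x x2 a b z ζ1 ζ2 r ρ)
    (hx : DriverBounds T κ B x x2) (hz : PathBounds T κ M z ζ1 ζ2 r ρ)
    (hs : s ∈ Icc 0 T) (ht : t ∈ Icc 0 T) :
    ‖z t - z s - fun i => ∑ k, ζ1 s i k * (x t k - x s k)‖
      ≤ 2 * B ^ 3 * M * (|t - s| ^ κ) ^ 2 := by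
  have hB := hx.one_le
  have hM := hz.one_le
  have hrem : z t - z s - (fun i => ∑ k, ζ1 s i k * (x t k - x s k))
      = (fun i => ∑ j, ∑ k, ζ2 s i j k * x2 s t k j) + r s t := by
    ext i
    simp only [Pi.add_apply, Pi.sub_apply]
    linarith [hw.decomp s hs t ht i]
  have hζ2 : ‖fun i => ∑ j, ∑ k, ζ2 s i j k * x2 s t k j‖
      ≤ B * (B * (M * (B * (|t - s| ^ κ) ^ 2))) := by
    have h := norm_sum_sum_mul_le (ζ2 s) (x2 s t)
    rw [Fintype.card_fin] at h
    refine h.trans ?_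
    gcongr <;> first
      | linarith
      | exact hx.dim_le
      | exact hz.norm_ζ2_le s hs
      | exact hx.norm_area_le s hs t ht
  have hr : ‖r s t‖ ≤ M * (|t - s| ^ κ) ^ 2 * B := by
    calc ‖r s t‖ ≤ M * (|t - s| ^ κ) ^ 3 := hz.norm_r_le s hs t ht
      _ = M * (|t - s| ^ κ) ^ 2 * |t - s| ^ κ := by ring
      _ ≤ M * (|t - s| ^ κ) ^ 2 * B := by gcongr; exact hx.rpow_abs_sub_le s hs t ht
  rw [hrem]
  refine (norm_add_le _ _).trans ?_
  linarith [mul_pow_mul_pow_le hB le_rfl (by positivity : 0 ≤ M * (|t - s| ^ κ) ^ 2) (i := 1)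
    (j := 0) (i' := 3) (j' := 0) (by norm_num) le_rfl]

lemma hBound2_composedρ (hφ : DerivBounds φ B) (hw : WCP T κ x x2 a b z ζ1 ζ2 r ρ)
    (hx : DriverBounds T κ B x x2) (hz : PathBounds T κ M z ζ1 ζ2 r ρ) :
    HBound2 0 T (2 * κ) (5 * B ^ 4 * M ^ 3) (composedρ φ x z ζ1 ζ2) := by
  intro s hs t ht
  rw [abs_sub_rpow_two_mul]
  have hB := hx.one_le
  have hM := hz.one_le
  have hC : 0 ≤ 5 * B ^ 4 * M ^ 3 * (|t - s| ^ κ) ^ 2 := by positivity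
  refine pi_norm_le_iff_of_nonneg hC |>.2 fun e => pi_norm_le_iff_of_nonneg hC |>.2 fun j => ?_
  rw [composedρ_apply hφ.differentiable_fderiv hw hs ht]
  set D₁ := fderiv ℝ φ
  set D₂ := fderiv ℝ (fderiv ℝ φ)
  have h₁ := (D₁ (z t) - D₁ (z s) - D₂ (z s) (z t - z s)).le_of_opNorm_le_of_le
    ((hφ.norm_fderiv_sub_sub_le _ _).trans
      (mul_le_mul_of_nonneg_left (pow_le_pow_left₀ (norm_nonneg _)
        (hz.norm_sub_le s hs t ht) 2) hφ.nonneg))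
    ((norm_apply_apply_le _ j).trans (hz.norm_ζ1_le t ht))
  have h₂ : ‖D₂ (z s) (z t - z s) ((ζ1 t · j) - (ζ1 s · j))‖
      ≤ B * (M * |t - s| ^ κ) * (M * |t - s| ^ κ) :=
    (D₂ (z s)).le_of_opNorm₂_le_of_le (hφ.norm_fderiv_fderiv_le _) (hz.norm_sub_le s hs t ht)
      ((norm_apply_apply_le (ζ1 t - ζ1 s) j).trans (hz.norm_ζ1_sub_le s hs t ht))
  have h₃ := (D₂ (z s)).le_of_opNorm₂_le_of_le (hφ.norm_fderiv_fderiv_le _)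
    (norm_sub_sub_sum_ζ1_mul_le hw hx hz hs ht)
    ((norm_apply_apply_le _ j).trans (hz.norm_ζ1_le s hs))
  have h₄ := (D₁ (z s)).le_of_opNorm_le_of_le (hφ.norm_fderiv_le _)
    ((norm_apply_apply_le _ j).trans (hz.norm_ρ_le s hs t ht))
  have hτ₂ : 0 ≤ (|t - s| ^ κ) ^ 2 := by positivity
  refine (add_le_add_left (norm_add₃_le) _ |>.trans' (norm_add_le _ _)).trans ?_
  linarith [mul_pow_mul_pow_le hB hM hτ₂ (i := 1) (j := 3) (i' := 4) (j' := 3) (by norm_num)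
    le_rfl, mul_pow_mul_pow_le hB hM hτ₂ (i := 1) (j := 2) (i' := 4) (j' := 3) (by norm_num)
    (by norm_num), mul_pow_mul_pow_le hB hM hτ₂ (i := 4) (j := 2) (i' := 4) (j' := 3) le_rfl
    (by norm_num), mul_pow_mul_pow_le hB hM hτ₂ (i := 1) (j := 1) (i' := 4) (j' := 3)
    (by norm_num) (by norm_num)]

lemma hBound2_composedR (hφ : DerivBounds φ B) (hX2 : HypX2 T x x2)
    (hw : WCP T κ x x2 a b z ζ1 ζ2 r ρ) (hx : DriverBounds T κ B x x2)
    (hz : PathBounds T κ M z ζ1 ζ2 r ρ) :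
    HBound2 0 T (3 * κ) (4 * B ^ 6 * M ^ 3) (composedR φ x x2 z ζ1 ζ2) := by
  intro s hs t ht
  rw [abs_sub_rpow_three_mul]
  have hB := hx.one_le
  have hM := hz.one_le
  have hC : 0 ≤ 4 * B ^ 6 * M ^ 3 * (|t - s| ^ κ) ^ 3 := by positivity
  refine pi_norm_le_iff_of_nonneg hC |>.2 fun e => ?_
  rw [composedR_apply hφ.contDiff hX2 hw hs ht]
  set D₂ := fderiv ℝ (fderiv ℝ φ) (z s)
  set A : Fin l → ℝ := fun i => ∑ k, ζ1 s i k * (x t k - x s k)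
  have hδz := hz.norm_sub_le s hs t ht
  have hQ := norm_sub_sub_sum_ζ1_mul_le hw hx hz hs ht
  have h₁ : ‖φ (z t) - φ (z s) - fderiv ℝ φ (z s) (z t - z s)
      - (1 / 2 : ℝ) * D₂ (z t - z s) (z t - z s)‖ ≤ B * (M * |t - s| ^ κ) ^ 3 :=
    (hφ.norm_taylor_le _ _).trans (by gcongr)
  have h₂ := (fderiv ℝ φ (z s)).le_of_opNorm_le_of_le (hφ.norm_fderiv_le _)
    (hz.norm_r_le s hs t ht)
  have h₃ := D₂.le_of_opNorm₂_le_of_le (hφ.norm_fderiv_fderiv_le _) hQ hδz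
  have h₄ := D₂.le_of_opNorm₂_le_of_le (hφ.norm_fderiv_fderiv_le _)
    (norm_sum_ζ1_mul_le hx hz hs ht) hQ
  have h₅ : ‖(1 / 2 : ℝ) * (D₂ (z t - z s - A) (z t - z s) + D₂ A (z t - z s - A))‖
      ≤ (1 / 2 : ℝ) * (‖D₂ (z t - z s - A) (z t - z s)‖ + ‖D₂ A (z t - z s - A)‖) := by
    rw [norm_mul, Real.norm_of_nonneg (by norm_num : (0 : ℝ) ≤ 1 / 2)]
    gcongr
    exact norm_add_le _ _
  have hτ₃ : 0 ≤ (|t - s| ^ κ) ^ 3 := by positivity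
  refine (norm_add₃_le).trans ?_
  linarith [mul_pow_mul_pow_le hB hM hτ₃ (i := 1) (j := 3) (i' := 6) (j' := 3) (by norm_num)
    le_rfl, mul_pow_mul_pow_le hB hM hτ₃ (i := 1) (j := 1) (i' := 6) (j' := 3) (by norm_num)
    (by norm_num), mul_pow_mul_pow_le hB hM hτ₃ (i := 4) (j := 2) (i' := 6) (j' := 3)
    (by norm_num) (by norm_num), mul_pow_mul_pow_le hB hM hτ₃ (i := 6) (j := 2) (i' := 6)
    (j' := 3) le_rfl (by norm_num)]

end CompositionEstimates

section Assembly

variable {T κ B M : ℝ} {d l : ℕ} {φ : (Fin l → ℝ) → ℝ} {x : ℝ → Fin d → ℝ}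
  {x2 : ℝ → ℝ → Fin d → Fin d → ℝ} {a : Fin l → ℝ} {b : Fin l → Fin d → ℝ}
  {z : ℝ → Fin l → ℝ} {ζ1 : ℝ → Fin l → Fin d → ℝ} {ζ2 : ℝ → Fin l → Fin d → Fin d → ℝ}
  {r : ℝ → ℝ → Fin l → ℝ} {ρ : ℝ → ℝ → Fin l → Fin d → ℝ}

lemma WCP.composed (hφ : DerivBounds φ B) (hX2 : HypX2 T x x2)
    (hw : WCP T κ x x2 a b z ζ1 ζ2 r ρ) (hx : DriverBounds T κ B x x2)
    (hz : PathBounds T κ M z ζ1 ζ2 r ρ) :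
    WCP T κ x x2 (fun _ => φ a) (fun _ j => ∑ i, pd φ a i * b i j) (composedPath φ z)
      (composedζ1 φ z ζ1) (composedζ2 φ z ζ1 ζ2) (composedR φ x x2 z ζ1 ζ2)
      (composedρ φ x z ζ1 ζ2) where
  init := by
    ext
    rw [composedPath, hw.init]
  init1 := by
    ext
    rw [composedζ1, hw.init, hw.init1]
  hz := ⟨_, by have := hφ.nonneg; have := hz.one_le; positivity, hBound2_composedPath hφ hz⟩
  hζ1 := ⟨_, by have := hφ.nonneg; positivity, hBound2_composedζ1 hφ hz⟩
  hζ2 := ⟨_, by have := hφ.nonneg; have := hz.one_le; positivity, hBound2_composedζ2 hφ hz⟩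
  hr := ⟨_, by have := hφ.nonneg; have := hz.one_le; positivity,
    hBound2_composedR hφ hX2 hw hx hz⟩
  hρ := ⟨_, by have := hφ.nonneg; have := hz.one_le; positivity, hBound2_composedρ hφ hw hx hz⟩
  decomp _ _ _ _ _ := by simp only [composedR, composedPath]; ring
  decompζ _ _ _ _ _ _ := by simp only [composedρ]; ring

lemma QNorm_composed_le (hφ : DerivBounds φ B) (hX2 : HypX2 T x x2)
    (hw : WCP T κ x x2 a b z ζ1 ζ2 r ρ) (hx : DriverBounds T κ B x x2)
    (hz : PathBounds T κ M z ζ1 ζ2 r ρ) :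
    QNorm T κ (composedPath φ z) (composedζ1 φ z ζ1) (composedζ2 φ z ζ1 ζ2)
      (composedR φ x x2 z ζ1 ζ2) (composedρ φ x z ζ1 ζ2) ≤ 20 * B ^ 6 * M ^ 3 := by
  have hB := hx.one_le
  have hM := hz.one_le
  have h₁ := HNorm2_le (by positivity) (hBound2_composedPath hφ hz)
  have h₂ := SupNorm_le (by positivity) fun t ht => norm_composedζ1_le hφ hz ht
  have h₃ := HNorm2_le (by positivity) (hBound2_composedζ1 hφ hz)
  have h₄ := SupNorm_le (by positivity) fun t ht => norm_composedζ2_le hφ hz ht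
  have h₅ := HNorm2_le (by positivity) (hBound2_composedζ2 hφ hz)
  have h₆ := HNorm2_le (by positivity) (hBound2_composedρ hφ hw hx hz)
  have h₇ := HNorm2_le (by positivity) (hBound2_composedR hφ hX2 hw hx hz)
  have h1 : (0 : ℝ) ≤ 1 := zero_le_one
  unfold QNorm
  linarith [mul_pow_mul_pow_le hB hM h1 (i := 1) (j := 1) (i' := 6) (j' := 3) (by norm_num)
    (by norm_num), mul_pow_mul_pow_le hB hM h1 (i := 1) (j := 2) (i' := 6) (j' := 3)
    (by norm_num) (by norm_num), mul_pow_mul_pow_le hB hM h1 (i := 1) (j := 3) (i' := 6)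
    (j' := 3) (by norm_num) le_rfl, mul_pow_mul_pow_le hB hM h1 (i := 4) (j := 3) (i' := 6)
    (j' := 3) (by norm_num) le_rfl]

end Assembly

lemma one_add_pow_three_le {N : ℝ} (hN : 0 ≤ N) : (1 + N) ^ 3 ≤ 4 * (1 + N ^ 3) := by
  nlinarith [mul_nonneg (sq_nonneg (1 - N)) (by linarith : 0 ≤ 1 + N)]

theorem statement4_general (T γ κ : ℝ) (hT : 0 < T) (d l : ℕ)
    (x : ℝ → Fin d → ℝ) (x2 : ℝ → ℝ → Fin d → Fin d → ℝ)
    (x3 : ℝ → ℝ → Fin d → Fin d → Fin d → ℝ)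
    (hX1 : HypX1 T γ d x x2 x3) (hX2 : HypX2 T x x2)
    (hκ0 : 0 < κ) (hκγ : κ ≤ γ)
    (φ : (Fin l → ℝ) → ℝ) (hφ : CbN 3 φ) :
    ∃ c : ℝ, 0 ≤ c ∧
      ∀ (a : Fin l → ℝ) (b : Fin l → Fin d → ℝ)
        (z : ℝ → Fin l → ℝ) (ζ1 : ℝ → Fin l → Fin d → ℝ)
        (ζ2 : ℝ → Fin l → Fin d → Fin d → ℝ)
        (r : ℝ → ℝ → Fin l → ℝ) (ρ : ℝ → ℝ → Fin l → Fin d → ℝ),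
        WCP T κ x x2 a b z ζ1 ζ2 r ρ →
        -- the data of the composed path `ẑ = φ(z)`
        (let zh : ℝ → Fin 1 → ℝ := fun t _ => φ (z t)
        let ζ1h : ℝ → Fin 1 → Fin d → ℝ := fun t _ j => ∑ i, pd φ (z t) i * ζ1 t i j
        let ζ2h : ℝ → Fin 1 → Fin d → Fin d → ℝ := fun t _ j k =>
          (∑ i, pd φ (z t) i * ζ2 t i j k)
            + ∑ i₁, ∑ i₂, pd2 φ (z t) i₁ i₂ * ζ1 t i₁ j * ζ1 t i₂ k
        let rh : ℝ → ℝ → Fin 1 → ℝ := fun s t e => (φ (z t) - φ (z s))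
          - (∑ j, ζ1h s e j * (x t j - x s j)) - ∑ j, ∑ k, ζ2h s e j k * x2 s t k j
        let ρh : ℝ → ℝ → Fin 1 → Fin d → ℝ := fun s t e j =>
          (ζ1h t e j - ζ1h s e j) - ∑ k, ζ2h s e j k * (x t k - x s k)
        -- `ẑ ∈ Q_{κ,â,b̂}(ℝ)` with `â = φ(a)`, `b̂^j = ∂ᵢφ(a) b^{ij}`, remainders
        -- `r̂ ∈ C₂^{3κ}`, `ρ̂ ∈ C₂^{2κ}`, and the cubic norm bound holds.
        WCP T κ x x2 (fun _ : Fin 1 => φ a) (fun _ : Fin 1 => fun j => ∑ i, pd φ a i * b i j)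
            zh ζ1h ζ2h rh ρh ∧
          QNorm T κ zh ζ1h ζ2h rh ρh ≤ c * (1 + QNorm T κ z ζ1 ζ2 r ρ ^ 3)) := by
  obtain ⟨B₁, hφB⟩ := hφ.exists_derivBounds
  obtain ⟨B₂, hxB⟩ := hX1.exists_driverBounds hκ0.le hκγ
  set B := max B₁ B₂
  have hφB' := hφB.mono (le_max_left B₁ B₂)
  have hxB' := hxB.mono (le_max_right B₁ B₂)
  refine ⟨80 * B ^ 6, by positivity, fun a b z ζ1 ζ2 r ρ hw => ?_⟩
  have hz := hw.pathBounds hT.le hκ0.le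
  have hcube := one_add_pow_three_le ((le_add_iff_nonneg_right 1).1 hz.one_le)
  refine ⟨hw.composed hφB' hX2 hxB' hz, (QNorm_composed_le hφB' hX2 hw hxB' hz).trans ?_⟩
  calc 20 * B ^ 6 * (1 + QNorm T κ z ζ1 ζ2 r ρ) ^ 3
      ≤ 20 * B ^ 6 * (4 * (1 + QNorm T κ z ζ1 ζ2 r ρ ^ 3)) :=
        mul_le_mul_of_nonneg_left hcube (by positivity)
    _ = 80 * B ^ 6 * (1 + QNorm T κ z ζ1 ζ2 r ρ ^ 3) := by ring

theorem statement4 (T γ κ : ℝ) (hT : 0 < T) (d l : ℕ)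
    (x : ℝ → Fin d → ℝ) (x2 : ℝ → ℝ → Fin d → Fin d → ℝ)
    (x3 : ℝ → ℝ → Fin d → Fin d → Fin d → ℝ)
    (hX1 : HypX1 T γ d x x2 x3) (hX2 : HypX2 T x x2)
    (hκ0 : 0 < κ) (hκγ : κ ≤ γ) (hsum : 1 < 3 * κ + γ)
    (φ : (Fin l → ℝ) → ℝ) (hφ : CbN 3 φ) :
    ∃ c : ℝ, 0 ≤ c ∧
      ∀ (a : Fin l → ℝ) (b : Fin l → Fin d → ℝ)
        (z : ℝ → Fin l → ℝ) (ζ1 : ℝ → Fin l → Fin d → ℝ)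
        (ζ2 : ℝ → Fin l → Fin d → Fin d → ℝ)
        (r : ℝ → ℝ → Fin l → ℝ) (ρ : ℝ → ℝ → Fin l → Fin d → ℝ),
        WCP T κ x x2 a b z ζ1 ζ2 r ρ →
        -- the data of the composed path `ẑ = φ(z)`
        (let zh : ℝ → Fin 1 → ℝ := fun t _ => φ (z t)
        let ζ1h : ℝ → Fin 1 → Fin d → ℝ := fun t _ j => ∑ i, pd φ (z t) i * ζ1 t i j
        let ζ2h : ℝ → Fin 1 → Fin d → Fin d → ℝ := fun t _ j k =>
          (∑ i, pd φ (z t) i * ζ2 t i j k)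
            + ∑ i₁, ∑ i₂, pd2 φ (z t) i₁ i₂ * ζ1 t i₁ j * ζ1 t i₂ k
        let rh : ℝ → ℝ → Fin 1 → ℝ := fun s t e => (φ (z t) - φ (z s))
          - (∑ j, ζ1h s e j * (x t j - x s j)) - ∑ j, ∑ k, ζ2h s e j k * x2 s t k j
        let ρh : ℝ → ℝ → Fin 1 → Fin d → ℝ := fun s t e j =>
          (ζ1h t e j - ζ1h s e j) - ∑ k, ζ2h s e j k * (x t k - x s k)
        -- `ẑ ∈ Q_{κ,â,b̂}(ℝ)` with `â = φ(a)`, `b̂^j = ∂ᵢφ(a) b^{ij}`, remainders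
        -- `r̂ ∈ C₂^{3κ}`, `ρ̂ ∈ C₂^{2κ}`, and the cubic norm bound holds.
        WCP T κ x x2 (fun _ : Fin 1 => φ a) (fun _ : Fin 1 => fun j => ∑ i, pd φ a i * b i j)
            zh ζ1h ζ2h rh ρh ∧
          QNorm T κ zh ζ1h ζ2h rh ρh ≤ c * (1 + QNorm T κ z ζ1 ζ2 r ρ ^ 3)) :=
  statement4_general T γ κ hT d l x x2 x3 hX1 hX2 hκ0 hκγ φ hφ
end
end
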